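/- arXiv:1805.04984 — 3 statements merged into one kernel-verified Lean document; each statement's English description precedes it below -/
import Mathlib

section
/- For a finite set V = {v_1,...,v_n} with distinct scalar values α_1 < α_2 < ... < α_n (n ≥ 2), define range(B) = max(B) - min(B) for nonempty B. In every optimal solution (S, S̄) to minimizing range(S) + range(S̄) over bipartitions with v_1 ∈ S, the element v_n with the largest value belongs to S̄. -/
open Finset

/-- Range of a finite set of elements under value function `α`. -/
noncomputable def rng {n : ℕ} (α : Fin n → ℝ) (S : Finset (Fin n)) : ℝ :=
  if h : S.Nonempty then S.sup' h α - S.inf' h α else 0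

/-- In every optimal solution to the min range sum problem with `v₁ ∈ S`,
the largest-valued element `vₙ` belongs to `S̄`. -/
theorem stmt0 (n : ℕ) (hn : 2 ≤ n) (α : Fin n → ℝ) (hα : StrictMono α)
    (S : Finset (Fin n)) (h1 : (⟨0, by omega⟩ : Fin n) ∈ S) (hSc : Sᶜ.Nonempty)
    (hopt : ∀ T : Finset (Fin n), T.Nonempty → Tᶜ.Nonempty →
      rng α S + rng α Sᶜ ≤ rng α T + rng α Tᶜ) :
    (⟨n - 1, by omega⟩ : Fin n) ∈ Sᶜ := by
  by_contra hc
  set z : Fin n := ⟨0, by omega⟩ with hz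
  set o : Fin n := ⟨1, by omega⟩ with ho
  set l : Fin n := ⟨n - 1, by omega⟩ with hl
  have hlS : l ∈ S := by simpa [Finset.mem_compl] using hc
  have hSne : S.Nonempty := ⟨z, h1⟩
  -- rng S ≥ α l - α z
  have hSsup : α l ≤ S.sup' hSne α := Finset.le_sup' α hlS
  have hSinf : S.inf' hSne α ≤ α z := Finset.inf'_le α h1
  -- rng Sᶜ ≥ 0
  obtain ⟨w, hw⟩ := id hSc
  have hScnn : (0:ℝ) ≤ Sᶜ.sup' hSc α - Sᶜ.inf' hSc α := by
    have h1 := Finset.inf'_le α hw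
    have h2 := Finset.le_sup' α hw
    linarith
  -- the comparison bipartition
  set T : Finset (Fin n) := {z} with hT
  have hTne : T.Nonempty := ⟨z, by simp [hT]⟩
  have hlz : l ≠ z := by
    simp only [hl, hz, Ne, Fin.mk.injEq]
    omega
  have hTcne : Tᶜ.Nonempty := ⟨l, by simp [hT, hlz]⟩
  have hTr : rng α T = 0 := by simp [rng, hT, hTne]
  have hTcsup : Tᶜ.sup' hTcne α ≤ α l := by
    apply Finset.sup'_le
    intro x _
    exact hα.monotone (by
      have := x.isLt
      simp only [hl, Fin.le_def]
      omega)
  have hTcinf : α o ≤ Tᶜ.inf' hTcne α := by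
    apply Finset.le_inf'
    intro x hx
    have hxz : x ≠ z := by simpa [hT] using hx
    apply hα.monotone
    have : x.val ≠ 0 := fun h => hxz (Fin.ext h)
    simp only [ho, Fin.le_def]
    omega
  have hzo : α z < α o := hα (by simp [hz, ho, Fin.lt_def])
  have key := hopt T hTne hTcne
  rw [hTr] at key
  simp only [rng, dif_pos hSne, dif_pos hSc, dif_pos hTcne] at key
  linarith
end

section
/- For a finite set V with distinct real values α_1 < ... < α_n (n ≥ 2), there is an optimal solution (S, S̄) to minimizing range(S) + range(S̄) over bipartitions such that max(S) ≤ min(S̄), i.e., the two sets correspond to non-overlapping intervals of values. -/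
open Finset

lemma rng_eq {n : ℕ} {α : Fin n → ℝ} (hα : StrictMono α) {T : Finset (Fin n)}
    (h : T.Nonempty) : rng α T = α (T.max' h) - α (T.min' h) := by
  rw [rng, dif_pos h]
  congr 1
  · exact le_antisymm (Finset.sup'_le _ _ fun b hb => hα.monotone (T.le_max' b hb))
      (Finset.le_sup' α (T.max'_mem h))
  · exact le_antisymm (Finset.inf'_le α (T.min'_mem h))
      (Finset.le_inf' _ _ fun b hb => hα.monotone (T.min'_le b hb))

lemma Iic_compl' {n : ℕ} (k : Fin n) : (Iic k)ᶜ = Ioi k := by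
  ext x; simp [not_le]

lemma key {n : ℕ} (hn : 2 ≤ n) {α : Fin n → ℝ} (hα : StrictMono α) (T : Finset (Fin n))
    (hT : T.Nonempty) (hTc : Tᶜ.Nonempty) (h0 : (⟨0, by omega⟩ : Fin n) ∈ T) :
    ∃ k : Fin n, k.val + 1 < n ∧
      rng α (Iic k) + rng α (Iic k)ᶜ ≤ rng α T + rng α Tᶜ := by
  classical
  set z : Fin n := ⟨0, by omega⟩ with hz
  set L : Fin n := ⟨n - 1, by omega⟩ with hL
  have haz : ∀ x : Fin n, α z ≤ α x := fun x => hα.monotone (by simp [hz, Fin.le_def])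
  have haL : ∀ x : Fin n, α x ≤ α L := fun x => hα.monotone (by
    simp [hL, Fin.le_def]; omega)
  have hs : ∀ (k : Fin n) (hk : k.val + 1 < n),
      rng α (Iic k) + rng α (Iic k)ᶜ = (α k - α z) + (α L - α ⟨k.val + 1, hk⟩) := by
    intro k hk
    have h1 : (Iic k).Nonempty := ⟨k, mem_Iic.2 le_rfl⟩
    have h2 : (Ioi k).Nonempty := ⟨⟨k.val + 1, hk⟩, mem_Ioi.2 (by simp [Fin.lt_def])⟩
    rw [Iic_compl', rng_eq hα h1, rng_eq hα h2]
    have e1 : (Iic k).max' h1 = k :=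
      le_antisymm (Finset.max'_le _ _ _ fun b hb => mem_Iic.1 hb)
        (Finset.le_max' _ _ (mem_Iic.2 le_rfl))
    have e2 : (Iic k).min' h1 = z :=
      le_antisymm (Finset.min'_le _ _ (mem_Iic.2 (Fin.le_def.2 (Nat.zero_le _))))
        (Fin.le_def.2 (Nat.zero_le _))
    have e3 : (Ioi k).max' h2 = L :=
      le_antisymm (Finset.max'_le _ _ _ fun b hb => by simp [hL, Fin.le_def]; omega)
        (Finset.le_max' _ _ (mem_Ioi.2 (by simp [hL, Fin.lt_def]; omega)))
    have e4 : (Ioi k).min' h2 = ⟨k.val + 1, hk⟩ :=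
      le_antisymm (Finset.min'_le _ _ (mem_Ioi.2 (by simp [Fin.lt_def])))
        (Finset.le_min' _ _ _ fun b hb => Fin.le_def.2 (Fin.lt_def.1 (mem_Ioi.1 hb)))
    rw [e1, e2, e3, e4]
  have hm : T.min' hT = z :=
    le_antisymm (Finset.min'_le _ _ h0) (by simp [hz, Fin.le_def])
  have hrT : rng α T = α (T.max' hT) - α z := by rw [rng_eq hα hT, hm]
  have hrTc0 : 0 ≤ rng α Tᶜ := by
    rw [rng_eq hα hTc]
    have := hα.monotone (Finset.min'_le _ _ (Tᶜ.max'_mem hTc))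
    linarith
  have h1n : (1 : ℕ) < n := by omega
  have hz1 : (z : Fin n).val + 1 < n := by simp [hz]; omega
  by_cases hLT : L ∈ T
  · refine ⟨z, hz1, ?_⟩
    rw [hs z hz1]
    have hmax : T.max' hT = L :=
      le_antisymm (by simp [hL, Fin.le_def]; omega) (Finset.le_max' _ _ hLT)
    rw [hrT, hmax]
    have := haz (⟨(z:Fin n).val + 1, hz1⟩ : Fin n)
    linarith
  · have hLc : L ∈ Tᶜ := Finset.mem_compl.2 hLT
    have hmaxc : Tᶜ.max' hTc = L :=
      le_antisymm (by simp [hL, Fin.le_def]; omega) (Finset.le_max' _ _ hLc)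
    set t := T.max' hT with ht
    set c := Tᶜ.min' hTc with hc
    have hrTc : rng α Tᶜ = α L - α c := by rw [rng_eq hα hTc, hmaxc]
    by_cases hct : c ≤ t
    · refine ⟨z, hz1, ?_⟩
      rw [hs z hz1, hrT, hrTc]
      have h1 := haz (⟨(z:Fin n).val + 1, hz1⟩ : Fin n)
      have h2 := hα.monotone hct
      linarith
    · have htc : t < c := lt_of_not_ge hct
      have hcL : c ≤ L := by simp [hL, Fin.le_def]; omega
      have htn : t.val + 1 < n := by
        have h1 := Fin.lt_def.1 htc
        have h2 := Fin.le_def.1 hcL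
        simp [hL] at h2; omega
      refine ⟨t, htn, ?_⟩
      rw [hs t htn, hrT, hrTc]
      have hsucc : (⟨t.val + 1, htn⟩ : Fin n) ∈ Tᶜ := by
        refine Finset.mem_compl.2 fun h => ?_
        have := Finset.le_max' T _ h
        rw [← ht] at this
        simp [Fin.le_def] at this
      have := hα.monotone (Finset.min'_le _ _ hsucc)
      rw [← hc] at this
      linarith

/-- There is an optimal solution to the min range sum problem in which
`max(S) ≤ min(S̄)`, i.e. the two sets correspond to non-overlapping intervals of values. -/
theorem stmt1 (n : ℕ) (hn : 2 ≤ n) (α : Fin n → ℝ) (hα : StrictMono α) :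
    ∃ S : Finset (Fin n), S.Nonempty ∧ Sᶜ.Nonempty ∧
      (∀ T : Finset (Fin n), T.Nonempty → Tᶜ.Nonempty →
        rng α S + rng α Sᶜ ≤ rng α T + rng α Tᶜ) ∧
      (∀ i ∈ S, ∀ j ∈ Sᶜ, α i ≤ α j) := by
  classical
  set g : Fin n → ℝ := fun k => rng α (Iic k) + rng α (Iic k)ᶜ with hg
  set F : Finset (Fin n) := univ.filter (fun k => k.val + 1 < n) with hF
  have hF0 : (⟨0, by omega⟩ : Fin n) ∈ F := by simp [hF]; omega
  obtain ⟨k₀, hk₀F, hmin⟩ := Finset.exists_min_image F g ⟨_, hF0⟩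
  have hk₀ : k₀.val + 1 < n := by simpa [hF] using hk₀F
  refine ⟨Iic k₀, ⟨k₀, mem_Iic.2 le_rfl⟩, ?_, ?_, ?_⟩
  · exact ⟨⟨k₀.val + 1, hk₀⟩, by simp [Iic_compl', Fin.lt_def]⟩
  · intro T hT hTc
    by_cases h0 : (⟨0, by omega⟩ : Fin n) ∈ T
    · obtain ⟨k, hk, hle⟩ := key hn hα T hT hTc h0
      exact le_trans (hmin k (by simp [hF, hk])) hle
    · have h0' : (⟨0, by omega⟩ : Fin n) ∈ Tᶜ := Finset.mem_compl.2 h0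
      obtain ⟨k, hk, hle⟩ := key hn hα Tᶜ hTc (by rwa [compl_compl]) h0'
      rw [compl_compl] at hle
      have := hmin k (by simp [hF, hk])
      simp only [hg] at this ⊢
      linarith
  · intro i hi j hj
    rw [Iic_compl', mem_Ioi] at hj
    exact hα.monotone (le_of_lt (lt_of_le_of_lt (mem_Iic.1 hi) hj))
end

section
/- Let f : ℕ → ℝ be positive and non-decreasing, α_1 < ... < α_n (n ≥ 2). The minimum of range(S)/f(|S|) + range(S̄)/f(|S̄|) over all bipartitions of V equals min over i ∈ {1,...,n-1} of (α_i - α_1)/f(i) + (α_n - α_{i+1})/f(n - i). -/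
/-!
A bipartition is never cheaper than some split of the sorted values into a prefix and a suffix.
If the smallest and largest values lie on the same side `S`, then `range(S) ≥ α_n - α_1`, and the
split `{α_1} | {α_2, …, α_n}` costs at most `range(S)/f(|S|)`, since `f` is monotone and
`|S| ≤ n - 1`. Otherwise, say `α_1 ∈ S` and `α_n ∉ S` with `|S| = i`: counting shows that
`max S ≥ α_i` and `min S̄ ≤ α_{i+1}`, so each term of the cost dominates the matching term of the
split after `α_i`. As every split is itself a bipartition, the two infima agree.
-/

open Finset

theorem csInf_eq_csInf_of_subset_of_forall_exists_le {β : Type*}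
    [ConditionallyCompleteLattice β] {s t : Set β} (hs : BddBelow s) (hts : t ⊆ s)
    (h : ∀ x ∈ s, ∃ y ∈ t, y ≤ x) :
    sInf s = sInf t := by
  rcases t.eq_empty_or_nonempty with rfl | ht
  · have : s = ∅ := Set.eq_empty_of_forall_notMem fun x hx => by
      obtain ⟨y, hy, -⟩ := h x hx
      exact hy
    rw [this]
  refine le_antisymm (csInf_le_csInf hs ht hts) (le_csInf (ht.mono hts) fun x hx => ?_)
  obtain ⟨y, hy, hyx⟩ := h x hx
  exact (csInf_le (hs.mono hts) hy).trans hyx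

namespace Fin

variable {n : ℕ}

theorem card_le_val_max'_add_one {S : Finset (Fin n)} (hS : S.Nonempty) :
    #S ≤ (S.max' hS : ℕ) + 1 := by
  simpa using card_le_card fun j hj => mem_Iic.2 (S.le_max' j hj)

theorem exists_notMem_le_of_card_le_val {S : Finset (Fin n)} (k : Fin n) (h : #S ≤ k) :
    ∃ u ∉ S, u ≤ k := by
  obtain ⟨u, hu, huS⟩ := exists_mem_notMem_of_card_lt_card (s := S) (t := Iic k)
    (by rw [card_Iic]; omega)
  exact ⟨u, huS, mem_Iic.1 hu⟩

end Fin

section Range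

variable {n : ℕ} (α : Fin n → ℝ)

theorem sub_le_rng {S : Finset (Fin n)} {u v : Fin n} (hu : u ∈ S) (hv : v ∈ S) :
    α v - α u ≤ rng α S := by
  rw [rng, dif_pos ⟨u, hu⟩]
  exact sub_le_sub (le_sup' α hv) (inf'_le α hu)

theorem rng_nonneg (S : Finset (Fin n)) : 0 ≤ rng α S := by
  rcases S.eq_empty_or_nonempty with rfl | ⟨u, hu⟩
  · simp [rng]
  · simpa using sub_le_rng α hu hu

variable {α}

theorem rng_eq_sub (hα : Monotone α) {S : Finset (Fin n)} {u v : Fin n} (hu : u ∈ S)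
    (hv : v ∈ S) (hlo : ∀ j ∈ S, u ≤ j) (hhi : ∀ j ∈ S, j ≤ v) : rng α S = α v - α u := by
  refine le_antisymm ?_ (sub_le_rng α hu hv)
  rw [rng, dif_pos ⟨u, hu⟩]
  exact sub_le_sub (sup'_le _ _ fun j hj => hα (hhi j hj))
    (le_inf' _ _ fun j hj => hα (hlo j hj))

end Range

section Cost

variable {n : ℕ} (α : Fin n → ℝ) (f : ℕ → ℝ)

noncomputable def bipartitionCost (S : Finset (Fin n)) : ℝ :=
  rng α S / f #S + rng α Sᶜ / f #Sᶜ

/-- The cost of splitting after the `i`-th value (0-based), i.e. into a prefix of size `i + 1`. -/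
noncomputable def splitCost (i : ℕ) (hi : i + 1 < n) : ℝ :=
  (α ⟨i, Nat.lt_of_succ_lt hi⟩ - α ⟨0, Nat.zero_lt_of_lt hi⟩) / f (i + 1) +
    (α ⟨n - 1, Nat.sub_one_lt_of_lt hi⟩ - α ⟨i + 1, hi⟩) / f (n - (i + 1))

theorem bipartitionCost_compl (S : Finset (Fin n)) :
    bipartitionCost α f Sᶜ = bipartitionCost α f S := by
  rw [bipartitionCost, bipartitionCost, compl_compl, add_comm]

variable {α f}

theorem bipartitionCost_Iic (hα : Monotone α) (i : ℕ) (hi : i + 1 < n) :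
    bipartitionCost α f (Iic ⟨i, Nat.lt_of_succ_lt hi⟩) = splitCost α f i hi := by
  have hcard : #(Iic (⟨i, by omega⟩ : Fin n)) = i + 1 := by simp
  have hcard_compl : #(Iic (⟨i, by omega⟩ : Fin n))ᶜ = n - (i + 1) := by
    rw [card_compl, hcard, Fintype.card_fin]
  have hrng : rng α (Iic ⟨i, by omega⟩) = α ⟨i, by omega⟩ - α ⟨0, by omega⟩ :=
    rng_eq_sub hα (by simp [Fin.le_def]) (by simp) (fun j _ => by simp [Fin.le_def])
      (fun j hj => mem_Iic.1 hj)
  have hrng_compl : rng α (Iic ⟨i, by omega⟩)ᶜ = α ⟨n - 1, by omega⟩ - α ⟨i + 1, hi⟩ :=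
    rng_eq_sub hα (by simp [Fin.le_def])
      (by simp only [mem_compl, mem_Iic, Fin.le_def, not_le]; omega)
      (fun j hj => by simp only [mem_compl, mem_Iic, Fin.le_def, not_le] at hj ⊢; omega)
      (fun j _ => by simp only [Fin.le_def]; omega)
  rw [bipartitionCost, splitCost, hcard, hcard_compl, hrng, hrng_compl]

theorem splitCost_zero_le_bipartitionCost (hα : Monotone α)
    (hfpos : ∀ m : ℕ, 0 < m → 0 < f m) (hfmono : Monotone f) (hn : 1 < n) {S : Finset (Fin n)}
    (hfirst : ⟨0, Nat.zero_lt_of_lt hn⟩ ∈ S) (hlast : ⟨n - 1, Nat.sub_one_lt_of_lt hn⟩ ∈ S)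
    (hSc : Sᶜ.Nonempty) :
    splitCost α f 0 hn ≤ bipartitionCost α f S := by
  have hcard : #S + #Sᶜ = n := by rw [card_add_card_compl, Fintype.card_fin]
  have hSc_card := hSc.card_pos
  have hS_card : 0 < #S := card_pos.2 ⟨_, hfirst⟩
  have hnum : α ⟨n - 1, by omega⟩ - α ⟨0 + 1, by omega⟩ ≤ rng α S :=
    (sub_le_sub_left (hα (by simp [Fin.le_def])) _).trans (sub_le_rng α hfirst hlast)
  have hsuffix :
      (α ⟨n - 1, by omega⟩ - α ⟨0 + 1, by omega⟩) / f (n - (0 + 1)) ≤ rng α S / f #S :=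
    div_le_div₀ (rng_nonneg α S) hnum (hfpos _ hS_card) (hfmono (by omega))
  have hcompl : 0 ≤ rng α Sᶜ / f #Sᶜ := div_nonneg (rng_nonneg α _) (hfpos _ hSc_card).le
  rw [splitCost, bipartitionCost, sub_self, zero_div, zero_add]
  linarith

theorem splitCost_le_bipartitionCost_of_card_eq (hα : Monotone α)
    (hfpos : ∀ m : ℕ, 0 < m → 0 < f m) {i : ℕ} (hi : i + 1 < n) {S : Finset (Fin n)}
    (hfirst : ⟨0, Nat.zero_lt_of_lt hi⟩ ∈ S) (hlast : ⟨n - 1, Nat.sub_one_lt_of_lt hi⟩ ∉ S)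
    (hS : #S = i + 1) :
    splitCost α f i hi ≤ bipartitionCost α f S := by
  have hcard_compl : #Sᶜ = n - (i + 1) := by
    rw [card_compl, Fintype.card_fin, hS]
  have hSne : S.Nonempty := ⟨_, hfirst⟩
  have hmax := Fin.card_le_val_max'_add_one hSne
  obtain ⟨u, hu, hu_le⟩ :=
    Fin.exists_notMem_le_of_card_le_val (S := S) ⟨i + 1, hi⟩ (by simp [hS])
  have hprefix : α ⟨i, by omega⟩ - α ⟨0, by omega⟩ ≤ rng α S :=
    (sub_le_sub_right (hα (Fin.mk_le_of_le_val (by omega))) _).trans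
      (sub_le_rng α hfirst (S.max'_mem hSne))
  have hsuffix : α ⟨n - 1, by omega⟩ - α ⟨i + 1, hi⟩ ≤ rng α Sᶜ :=
    (sub_le_sub_left (hα hu_le) _).trans (sub_le_rng α (mem_compl.2 hu) (mem_compl.2 hlast))
  rw [splitCost, bipartitionCost, hS, hcard_compl]
  exact add_le_add (div_le_div_of_nonneg_right hprefix (hfpos _ (by omega)).le)
    (div_le_div_of_nonneg_right hsuffix (hfpos _ (by omega)).le)

theorem exists_splitCost_le_bipartitionCost (hα : Monotone α)
    (hfpos : ∀ m : ℕ, 0 < m → 0 < f m) (hfmono : Monotone f) {S : Finset (Fin n)}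
    (hS : S.Nonempty) (hSc : Sᶜ.Nonempty) :
    ∃ i, ∃ hi : i + 1 < n, splitCost α f i hi ≤ bipartitionCost α f S := by
  have hcard : #S + #Sᶜ = n := by rw [card_add_card_compl, Fintype.card_fin]
  have hn : 1 < n := by
    have := hS.card_pos
    have := hSc.card_pos
    omega
  wlog hfirst : ⟨0, by omega⟩ ∈ S generalizing S
  · rw [← bipartitionCost_compl]
    exact this hSc (by rwa [compl_compl]) (by rwa [compl_compl, add_comm])
      (mem_compl.2 hfirst)
  by_cases hlast : ⟨n - 1, by omega⟩ ∈ S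
  · exact ⟨0, hn, splitCost_zero_le_bipartitionCost hα hfpos hfmono hn hfirst hlast hSc⟩
  · have := hS.card_pos
    have := hSc.card_pos
    exact ⟨#S - 1, by omega,
      splitCost_le_bipartitionCost_of_card_eq hα hfpos _ hfirst hlast (by omega)⟩

end Cost

/-- The minimum of `range(S)/f(|S|) + range(S̄)/f(|S̄|)` over bipartitions equals the
minimum over split points `i` of `(α_i - α_1)/f(i) + (α_n - α_{i+1})/f(n-i)`
(0-based: split after element `i`, prefix size `i+1`). -/
theorem stmt8 (n : ℕ) (α : Fin n → ℝ) (hα : StrictMono α)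
    (f : ℕ → ℝ) (hfpos : ∀ m : ℕ, 0 < m → 0 < f m) (hfmono : Monotone f) :
    sInf {x : ℝ | ∃ S : Finset (Fin n), S.Nonempty ∧ Sᶜ.Nonempty ∧
        x = rng α S / f S.card + rng α Sᶜ / f Sᶜ.card} =
    sInf {x : ℝ | ∃ i : ℕ, ∃ hi : i + 1 < n,
        x = (α ⟨i, by omega⟩ - α ⟨0, by omega⟩) / f (i + 1) +
          (α ⟨n - 1, by omega⟩ - α ⟨i + 1, hi⟩) / f (n - (i + 1))} := by
  have hbdd : BddBelow {x : ℝ | ∃ S : Finset (Fin n), S.Nonempty ∧ Sᶜ.Nonempty ∧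
      x = bipartitionCost α f S} :=
    ((Set.finite_range (bipartitionCost α f)).subset
      (by rintro _ ⟨S, -, -, rfl⟩; exact ⟨S, rfl⟩)).bddBelow
  refine csInf_eq_csInf_of_subset_of_forall_exists_le hbdd ?_ ?_
  · rintro _ ⟨i, hi, rfl⟩
    exact ⟨Iic ⟨i, by omega⟩, ⟨_, mem_Iic.2 le_rfl⟩, ⟨⟨i + 1, hi⟩, by simp [Fin.le_def]⟩,
      (bipartitionCost_Iic hα.monotone i hi).symm⟩
  · rintro _ ⟨S, hS, hSc, rfl⟩
    obtain ⟨i, hi, hle⟩ :=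
      exists_splitCost_le_bipartitionCost hα.monotone hfpos hfmono hS hSc
    exact ⟨_, ⟨i, hi, rfl⟩, hle⟩
end
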